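/- Let (X,d) be a compact metric space and f : X → X an arbitrary self-map. Then there exists a point x ∈ X with x 𝒞⊆ x; that is, there are a non-increasing sequence of positive reals εₙ → 0 and εₙ-chains Cₙ from x to x whose point sets satisfy Cₙ ⊆ Cₙ₊₁ for all n. -/

import Mathlib

open Filter Topology Set

variable {X : Type*}

section Defs
variable [PseudoMetricSpace X]

def IsEpsChain (f : X → X) (ε : ℝ) (n : ℕ) (c : ℕ → X) (x y : X) : Prop :=
  1 ≤ n ∧ c 0 = x ∧ c n = y ∧ ∀ i < n, dist (f (c i)) (c (i + 1)) < ε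

def EpsChain (f : X → X) (ε : ℝ) (x y : X) : Prop :=
  ∃ n c, IsEpsChain f ε n c x y

/-- The chain relation `x 𝒞 y`. -/
def ChainRel (f : X → X) (x y : X) : Prop :=
  ∀ ε > 0, EpsChain f ε x y

def EpsChainIn (f : X → X) (S : Set X) (ε : ℝ) (x y : X) : Prop :=
  ∃ n c, IsEpsChain f ε n c x y ∧ ∀ i ≤ n, c i ∈ S

def ChainRelIn (f : X → X) (S : Set X) (x y : X) : Prop :=
  ∀ ε > 0, EpsChainIn f S ε x y

def InternallyChainTransitive (f : X → X) (S : Set X) : Prop :=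
  ∀ x ∈ S, ∀ y ∈ S, ∀ ε > 0, EpsChainIn f S ε x y

/-- The nested-chain relation `x 𝒞⊆ y`. -/
def NestedChainRel (f : X → X) (x y : X) : Prop :=
  ∃ ε : ℕ → ℝ, (∀ n, 0 < ε n) ∧ Antitone ε ∧ Tendsto ε atTop (𝓝 0) ∧
    ∃ N : ℕ → ℕ, ∃ c : ℕ → ℕ → X,
      (∀ n, IsEpsChain f (ε n) (N n) (c n) x y) ∧
      ∀ n, c n '' Set.Iic (N n) ⊆ c (n + 1) '' Set.Iic (N (n + 1))

/-- The nested-chain relation with all chain points inside `S`. -/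
def NestedChainRelIn (f : X → X) (S : Set X) (x y : X) : Prop :=
  ∃ ε : ℕ → ℝ, (∀ n, 0 < ε n) ∧ Antitone ε ∧ Tendsto ε atTop (𝓝 0) ∧
    ∃ N : ℕ → ℕ, ∃ c : ℕ → ℕ → X,
      (∀ n, IsEpsChain f (ε n) (N n) (c n) x y ∧ ∀ i ≤ N n, c n i ∈ S) ∧
      ∀ n, c n '' Set.Iic (N n) ⊆ c (n + 1) '' Set.Iic (N (n + 1))

end Defs

/-- Strong `(ε,d)`-chain for an explicitly given distance function `d`. -/
def StrongEpsChainWith (d : X → X → ℝ) (f : X → X) (ε : ℝ) (x y : X) : Prop :=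
  ∃ n, 1 ≤ n ∧ ∃ c : ℕ → X, c 0 = x ∧ c n = y ∧
    (∑ i ∈ Finset.range n, d (f (c i)) (c (i + 1))) < ε

/-- The strong chain relation `x 𝒮𝒞_d y`. -/
def StrongChainRelWith (d : X → X → ℝ) (f : X → X) (x y : X) : Prop :=
  ∀ ε > 0, StrongEpsChainWith d f ε x y

/-!
By Zorn's lemma and compactness there is a minimal nonempty closed `f`-invariant set `M`.
For `f` restricted to `M` every point chains to every other one: the set of points
chain-reachable from `x` is closed and invariant, hence all of `M`. So an `εₙ`-chain in `M`
can be refined to an `εₙ₊₁`-chain in `M` passing through all of its points, by linking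
consecutive points with `εₙ₊₁`-chains; iterating gives the nested chains.
-/

open Function

def chainAppend (m : ℕ) (c d : ℕ → X) : ℕ → X :=
  fun i => if i ≤ m then c i else d (i - m)

theorem image_chainAppend {m n : ℕ} {c d : ℕ → X} (hcd : c m = d 0) :
    chainAppend m c d '' Iic (m + n) = c '' Iic m ∪ d '' Iic n := by
  ext z
  simp only [chainAppend, mem_image, mem_Iic, mem_union]
  constructor
  · rintro ⟨i, hi, rfl⟩
    by_cases him : i ≤ m
    · exact .inl ⟨i, him, by simp [him]⟩
    · exact .inr ⟨i - m, by omega, by simp [him]⟩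
  · rintro (⟨i, hi, rfl⟩ | ⟨j, hj, rfl⟩)
    · exact ⟨i, by omega, by simp [hi]⟩
    · rcases j.eq_zero_or_pos with rfl | hj0
      · exact ⟨m, by omega, by simp [hcd]⟩
      · exact ⟨m + j, by omega, by simp [show ¬m + j ≤ m by omega]⟩

section Chains

variable [PseudoMetricSpace X] {f : X → X} {ε δ : ℝ} {m n : ℕ} {c d : ℕ → X} {x y z : X}

theorem IsEpsChain.append (hc : IsEpsChain f ε m c x y) (hd : IsEpsChain f ε n d y z) :
    IsEpsChain f ε (m + n) (chainAppend m c d) x z := by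
  obtain ⟨hm, hc0, hcm, hcε⟩ := hc
  obtain ⟨hn, hd0, hdn, hdε⟩ := hd
  refine ⟨by omega, by simp [chainAppend, hc0],
    by simp [chainAppend, show ¬m + n ≤ m by omega, hdn], fun i hi => ?_⟩
  rcases lt_trichotomy i m with him | rfl | him
  · simpa [chainAppend, him.le, Nat.succ_le_of_lt him] using hcε i him
  · simpa [chainAppend, hcm, ← hd0] using hdε 0 hn
  · simpa [chainAppend, show ¬i ≤ m by omega, show ¬i < m by omega,
      show i + 1 - m = i - m + 1 by omega] using hdε (i - m) (by omega)

theorem EpsChain.trans (h₁ : EpsChain f ε x y) (h₂ : EpsChain f ε y z) : EpsChain f ε x z :=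
  let ⟨_, _, hc⟩ := h₁
  let ⟨_, _, hd⟩ := h₂
  ⟨_, _, hc.append hd⟩

theorem epsChain_apply_right (hε : 0 < ε) (x : X) : EpsChain f ε x (f x) :=
  ⟨1, fun i => if i = 0 then x else f x, le_rfl, rfl, rfl, fun i hi => by
    obtain rfl : i = 0 := by omega
    simpa using hε⟩

theorem EpsChain.of_dist_lt (h : EpsChain f ε x y) (hyz : dist y z < δ) :
    EpsChain f (ε + δ) x z := by
  obtain ⟨n, c, hn, hc0, hcn, hcε⟩ := h
  refine ⟨n, update c n z, hn, by simp [update_of_ne (by omega : 0 ≠ n), hc0], by simp,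
    fun i hi => ?_⟩
  rw [update_of_ne hi.ne]
  by_cases hin : i + 1 = n
  · have hstep := hcε i hi
    rw [hin, hcn] at hstep
    rw [hin, update_self]
    linarith [dist_triangle (f (c i)) y z]
  · rw [update_of_ne hin]
    linarith [hcε i hi, dist_nonneg (x := y) (y := z)]

theorem ChainRel.trans (h₁ : ChainRel f x y) (h₂ : ChainRel f y z) : ChainRel f x z :=
  fun ε hε => (h₁ ε hε).trans (h₂ ε hε)

theorem chainRel_apply_right (x : X) : ChainRel f x (f x) :=
  fun _ hε => epsChain_apply_right hε x

theorem isClosed_setOf_chainRel (x : X) : IsClosed {y | ChainRel f x y} := by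
  refine isClosed_of_closure_subset fun z hz ε hε => ?_
  obtain ⟨y, hy, hyz⟩ := Metric.mem_closure_iff.mp hz (ε / 2) (half_pos hε)
  have hchain := (hy (ε / 2) (half_pos hε)).of_dist_lt (by rwa [dist_comm] at hyz)
  rwa [add_halves] at hchain

theorem exists_isEpsChain_through (h : ∀ x y, ChainRel f x y) (hε : 0 < ε) (p : ℕ → X)
    (k : ℕ) :
    ∃ m e, IsEpsChain f ε m e (p 0) (p k) ∧ p '' Iic k ⊆ e '' Iic m := by
  induction k with
  | zero =>
    obtain ⟨m, e, he⟩ := h (p 0) (p 0) ε hε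
    refine ⟨m, e, he, ?_⟩
    rintro _ ⟨i, hi, rfl⟩
    obtain rfl : i = 0 := Nat.le_zero.mp hi
    exact ⟨0, Nat.zero_le m, he.2.1⟩
  | succ k ih =>
    obtain ⟨m, e, he, hpe⟩ := ih
    obtain ⟨n, d, hd⟩ := h (p k) (p (k + 1)) ε hε
    refine ⟨m + n, chainAppend m e d, he.append hd, ?_⟩
    rw [image_chainAppend (he.2.2.1.trans hd.2.1.symm)]
    rintro _ ⟨i, hi, rfl⟩
    rcases Nat.le_succ_iff.mp hi with hik | rfl
    · exact .inl (hpe ⟨i, hik, rfl⟩)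
    · exact .inr ⟨n, mem_Iic.2 le_rfl, hd.2.2.1⟩

theorem nestedChainRel_of_forall_chainRel (h : ∀ x y, ChainRel f x y) (x y : X) :
    NestedChainRel f x y := by
  choose m e he hsub using fun (n : ℕ) (q : ℕ × (ℕ → X)) =>
    exists_isEpsChain_through h (Nat.one_div_pos_of_nat (n := n)) q.2 q.1
  -- `q 0` is the two-point sequence `x, y`; `q (n + 1)` is a `1/(n+1)`-chain through `q n`.
  let q : ℕ → ℕ × (ℕ → X) := fun n =>
    Nat.rec (1, fun i => if i = 0 then x else y) (fun n q => (m n q, e n q)) n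
  have hq : ∀ n, (q n).2 0 = x ∧ (q n).2 (q n).1 = y := by
    intro n
    induction n with
    | zero => simp [q]
    | succ n ih => exact ⟨(he n (q n)).2.1.trans ih.1, (he n (q n)).2.2.1.trans ih.2⟩
  refine ⟨fun n => 1 / ((n : ℝ) + 1), fun n => Nat.one_div_pos_of_nat,
    fun _ _ hab => Nat.one_div_le_one_div hab, tendsto_one_div_add_atTop_nhds_zero_nat,
    fun n => (q (n + 1)).1, fun n => (q (n + 1)).2, fun n => ?_,
    fun n => hsub (n + 1) (q (n + 1))⟩
  rw [← (hq n).1, ← (hq n).2]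
  exact he n (q n)

end Chains

section Map

variable {Y : Type*} [PseudoMetricSpace X] [PseudoMetricSpace Y] {f : X → X} {g : Y → Y}
  {φ : Y → X} {ε : ℝ} {n : ℕ} {c : ℕ → Y} {x y : Y}

theorem IsEpsChain.map (hφ : Isometry φ) (hφg : Semiconj φ g f) (h : IsEpsChain g ε n c x y) :
    IsEpsChain f ε n (φ ∘ c) (φ x) (φ y) :=
  ⟨h.1, congrArg φ h.2.1, congrArg φ h.2.2.1, fun i hi => by
    simpa only [comp_apply, ← hφg.eq, hφ.dist_eq] using h.2.2.2 i hi⟩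

theorem NestedChainRel.map (hφ : Isometry φ) (hφg : Semiconj φ g f)
    (h : NestedChainRel g x y) : NestedChainRel f (φ x) (φ y) := by
  obtain ⟨ε, hpos, hanti, hlim, N, c, hc, hsub⟩ := h
  refine ⟨ε, hpos, hanti, hlim, N, fun n => φ ∘ c n, fun n => (hc n).map hφ hφg,
    fun n => ?_⟩
  simp only [image_comp]
  exact image_mono (hsub n)

end Map

section Minimal

variable [TopologicalSpace X] {f : X → X} {M : Set X}

def IsMinimalSet (f : X → X) (M : Set X) : Prop :=
  Minimal (fun A : Set X => A.Nonempty ∧ IsClosed A ∧ MapsTo f A A) M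

theorem exists_isMinimalSet [CompactSpace X] [Nonempty X] (f : X → X) :
    ∃ M, IsMinimalSet f M := by
  obtain ⟨M, -, hM⟩ := zorn_superset_nonempty
    {A : Set X | A.Nonempty ∧ IsClosed A ∧ MapsTo f A A}
    (fun C hC hchain hne => by
      have : Nonempty C := hne.to_subtype
      have hdir : DirectedOn (· ⊇ ·) C := fun A hA B hB =>
        (hchain.total hA hB).elim (fun h => ⟨A, hA, subset_rfl, h⟩)
          fun h => ⟨B, hB, h, subset_rfl⟩
      refine ⟨⋂₀ C, ⟨?_, isClosed_sInter fun A hA => (hC hA).2.1, ?_⟩,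
        fun A => sInter_subset_of_mem⟩
      · exact IsCompact.nonempty_sInter_of_directed_nonempty_isCompact_isClosed
          hdir (fun A hA => (hC hA).1) (fun A hA => (hC hA).2.1.isCompact)
          (fun A hA => (hC hA).2.1)
      · exact mapsTo_sInter.2 fun A hA => (hC hA).2.2.mono_left (sInter_subset_of_mem hA))
    univ ⟨univ_nonempty, isClosed_univ, mapsTo_univ f _⟩
  exact ⟨M, hM⟩

theorem IsMinimalSet.mapsTo (hM : IsMinimalSet f M) : MapsTo f M M := hM.1.2.2

theorem IsMinimalSet.restrict (hM : IsMinimalSet f M) :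
    IsMinimalSet (hM.mapsTo.restrict f M M) univ := by
  have : Nonempty M := hM.1.1.to_subtype
  refine ⟨⟨univ_nonempty, isClosed_univ, mapsTo_univ _ _⟩, fun A hA _ a _ => ?_⟩
  have hAM : Subtype.val '' A = M := hM.eq_of_subset
    ⟨hA.1.image _, hM.1.2.1.isClosedMap_subtype_val A hA.2.1,
      fun _ ⟨b, hb, hba⟩ => ⟨_, hA.2.2 hb, hba ▸ rfl⟩⟩ (Subtype.coe_image_subset M A)
  obtain ⟨b, hb, hba⟩ := hAM.ge a.2
  exact Subtype.ext hba ▸ hb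

end Minimal

theorem chainRel_of_isMinimalSet_univ [PseudoMetricSpace X] {f : X → X}
    (hf : IsMinimalSet f univ) (x y : X) : ChainRel f x y := by
  have hreach : {z | ChainRel f x z} = univ := hf.eq_of_subset
    ⟨⟨f x, chainRel_apply_right x⟩, isClosed_setOf_chainRel x,
      fun _ hz => hz.trans (chainRel_apply_right _)⟩ (subset_univ _)
  exact hreach.ge (mem_univ y)

theorem stmt12 [MetricSpace X] [CompactSpace X] [Nonempty X] (f : X → X) :
    ∃ x : X, NestedChainRel f x x := by
  obtain ⟨M, hM⟩ := exists_isMinimalSet f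
  obtain ⟨x, hx⟩ := hM.1.1
  have hchain := chainRel_of_isMinimalSet_univ hM.restrict
  exact ⟨_, (nestedChainRel_of_forall_chainRel hchain ⟨x, hx⟩ ⟨x, hx⟩).map
    isometry_subtype_coe fun _ => rfl⟩
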